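/- arXiv:2301.03161 — 4 statements merged into one kernel-verified Lean document; each statement's English description precedes it below -/
import Mathlib

section
/- Node cover equivalent world vertices are interchangeable in any subgraph isomorphism extending a partial match on a node cover. -/
def StructEquiv {V : Type*} (E : V → V → Prop) (v w : V) : Prop :=
  (∀ u, u ≠ v → u ≠ w → ((E u v ↔ E u w) ∧ (E v u ↔ E w u))) ∧ (E v w ↔ E w v)

def SubIso {VT VW : Type*} (ET : VT → VT → Prop) (EW : VW → VW → Prop) (f : VT → VW) : Prop :=
  Function.Injective f ∧ ∀ a b, ET a b → EW (f a) (f b)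

/-- `N` is a node cover: every template edge has an endpoint in `N`. -/
def NodeCover {VT : Type*} (ET : VT → VT → Prop) (N : Set VT) : Prop :=
  ∀ a b, ET a b → a ∈ N ∨ b ∈ N

/-- A partial match on `N`: injective and edge-preserving on `N`. -/
def PartialMatch {VT VW : Type*} (ET : VT → VT → Prop) (EW : VW → VW → Prop)
    (N : Set VT) (M : N → VW) : Prop :=
  Function.Injective M ∧ ∀ a b : N, ET a b → EW (M a) (M b)

/-- World vertex `c` is joinable to the partial match `M` as a candidate for `u`. -/
def Joinable {VT VW : Type*} (ET : VT → VT → Prop) (EW : VW → VW → Prop)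
    (N : Set VT) (M : N → VW) (u : VT) (c : VW) : Prop :=
  ∀ v : N, (ET v u → EW (M v) c) ∧ (ET u v → EW c (M v))

/-! Both modified maps equal `Equiv.swap w₁ w₂ ∘ f`. Because `N` is a node cover, every template
edge has an endpoint in `N`, so a map that is injective, agrees with `M` on `N`, and sends each
`u ∉ N` to a vertex joinable for `u` is already a subgraph isomorphism. The swap fixes the image of
`M`, and node cover equivalence says exactly that it preserves joinability for every `u ∉ N`. -/

open Function

theorem Equiv.apply_swap_of_iff {α : Type*} [DecidableEq α] {P : α → Prop} {a b c : α}
    (hab : P a ↔ P b) (hc : P c) : P (Equiv.swap a b c) := by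
  rw [Equiv.swap_apply_def]
  split_ifs with hca hcb
  · exact hab.1 (hca ▸ hc)
  · exact hab.2 (hcb ▸ hc)
  · exact hc

section SwapComp

variable {α β : Type*} [DecidableEq α] [DecidableEq β] {f : α → β} {v₁ v₂ : α} {w₁ w₂ : β}

theorem ite_ite_eq_swap_comp (hf : Injective f) (h₁ : f v₁ = w₁) (h₂ : f v₂ = w₂) :
    (fun u => if u = v₁ then w₂ else if u = v₂ then w₁ else f u) = Equiv.swap w₁ w₂ ∘ f := by
  funext u
  by_cases hu₁ : u = v₁
  · simp [hu₁, h₁]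
  by_cases hu₂ : u = v₂
  · subst hu₂
    simp [hu₁, h₂]
  rw [if_neg hu₁, if_neg hu₂, comp_apply, Equiv.swap_apply_of_ne_of_ne]
  · exact fun h => hu₁ (hf (h.trans h₁.symm))
  · exact fun h => hu₂ (hf (h.trans h₂.symm))

theorem update_eq_swap_comp (hf : Injective f) (h₁ : f v₁ = w₁) (h₂ : w₂ ∉ Set.range f) :
    update f v₁ w₂ = Equiv.swap w₁ w₂ ∘ f := by
  funext u
  by_cases hu : u = v₁
  · simp [hu, h₁]
  rw [update_of_ne hu, comp_apply, Equiv.swap_apply_of_ne_of_ne]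
  · exact fun h => hu (hf (h.trans h₁.symm))
  · exact fun h => h₂ ⟨u, h⟩

end SwapComp

section Joinable

variable {VT VW : Type*} {ET : VT → VT → Prop} {EW : VW → VW → Prop} {N : Set VT} {M : N → VW}

theorem joinable_apply {f : VT → VW} (hf : ∀ a b, ET a b → EW (f a) (f b))
    (hext : ∀ v : N, f v = M v) (u : VT) : Joinable ET EW N M u (f u) :=
  fun v => ⟨fun h => hext v ▸ hf _ _ h, fun h => hext v ▸ hf _ _ h⟩

theorem subIso_of_joinable (hN : NodeCover ET N) (hM : ∀ a b : N, ET a b → EW (M a) (M b))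
    {g : VT → VW} (hg : Injective g) (hext : ∀ v : N, g v = M v)
    (hjoin : ∀ u, u ∉ N → Joinable ET EW N M u (g u)) : SubIso ET EW g := by
  refine ⟨hg, fun a b hab => ?_⟩
  by_cases ha : a ∈ N <;> by_cases hb : b ∈ N
  · rw [show g a = M ⟨a, ha⟩ from hext ⟨a, ha⟩, show g b = M ⟨b, hb⟩ from hext ⟨b, hb⟩]
    exact hM _ _ hab
  · rw [show g a = M ⟨a, ha⟩ from hext ⟨a, ha⟩]
    exact (hjoin b hb ⟨a, ha⟩).1 hab
  · rw [show g b = M ⟨b, hb⟩ from hext ⟨b, hb⟩]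
    exact (hjoin a ha ⟨b, hb⟩).2 hab
  · exact ((hN a b hab).elim ha hb).elim

end Joinable

theorem nodeCoverEquiv_interchangeable {VT VW : Type*} [DecidableEq VT]
    (ET : VT → VT → Prop) (EW : VW → VW → Prop)
    (N : Set VT) (hN : NodeCover ET N) (M : N → VW) (hM : PartialMatch ET EW N M)
    (w₁ w₂ : VW) (hw₁ : w₁ ∉ Set.range M) (hw₂ : w₂ ∉ Set.range M)
    (hnc : ∀ u : VT, u ∉ N → (Joinable ET EW N M u w₁ ↔ Joinable ET EW N M u w₂))
    (f : VT → VW) (hf : SubIso ET EW f) (hext : ∀ v : N, f v = M v) :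
    (∀ v₁ v₂ : VT, f v₁ = w₁ → f v₂ = w₂ →
      SubIso ET EW (fun u => if u = v₁ then w₂ else if u = v₂ then w₁ else f u) ∧
      ∀ v : N, (if (v : VT) = v₁ then w₂ else if (v : VT) = v₂ then w₁ else f v) = M v) ∧
    (∀ v₁ : VT, f v₁ = w₁ → w₂ ∉ Set.range f →
      SubIso ET EW (Function.update f v₁ w₂) ∧
      ∀ v : N, Function.update f v₁ w₂ v = M v) := by
  classical
  have hg_ext : ∀ v : N, (Equiv.swap w₁ w₂ ∘ f) v = M v := fun v => by
    rw [comp_apply, hext v]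
    exact Equiv.swap_apply_of_ne_of_ne (fun h => hw₁ ⟨v, h⟩) (fun h => hw₂ ⟨v, h⟩)
  have hg : SubIso ET EW (Equiv.swap w₁ w₂ ∘ f) :=
    subIso_of_joinable hN hM.2 ((Equiv.injective _).comp hf.1) hg_ext fun u hu =>
      Equiv.apply_swap_of_iff (hnc u hu) (joinable_apply hf.2 hext u)
  refine ⟨fun v₁ v₂ h₁ h₂ => ?_, fun v₁ h₁ h₂ => ?_⟩
  · have e := ite_ite_eq_swap_comp hf.1 h₁ h₂
    exact ⟨e ▸ hg, fun v => (congrFun e v).trans (hg_ext v)⟩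
  · have e := update_eq_swap_comp hf.1 h₁ h₂
    exact ⟨e ▸ hg, fun v => (congrFun e v).trans (hg_ext v)⟩
end

section
/- For vertices outside a node cover with candidate sets reduced to joinable vertices, node cover equivalence coincides with full candidate equivalence. -/
/-- The vertices of the candidate structure: template vertex–candidate pairs. -/
def CandVert {VT VW : Type*} (C : VT → Set VW) : Type _ := {p : VT × VW // p.2 ∈ C p.1}

/-- The edge relation of the candidate structure. -/
def CandEdge {VT VW : Type*} (C : VT → Set VW) (ET : VT → VT → Prop) (EW : VW → VW → Prop) :
    CandVert C → CandVert C → Prop :=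
  fun p q => ET p.1.1 q.1.1 ∧ EW p.1.2 q.1.2

/-- Candidate equivalence of world vertices with respect to template vertex `u`. -/
def CandEquivAt {VT VW : Type*} (C : VT → Set VW) (ET : VT → VT → Prop) (EW : VW → VW → Prop)
    (u : VT) (c₁ c₂ : VW) : Prop :=
  (c₁ ∉ C u ∧ c₂ ∉ C u) ∨
  ∃ (h₁ : c₁ ∈ C u) (h₂ : c₂ ∈ C u),
    StructEquiv (CandEdge C ET EW) ⟨(u, c₁), h₁⟩ ⟨(u, c₂), h₂⟩

/-- Full candidate equivalence. -/
def FullCandEquiv {VT VW : Type*} (C : VT → Set VW) (ET : VT → VT → Prop) (EW : VW → VW → Prop)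
    (c₁ c₂ : VW) : Prop :=
  ∀ u, CandEquivAt C ET EW u c₁ c₂

/-- The candidate sets after a partial match `M` on a node cover `N`:
matched vertices keep only their match, unmatched vertices get all joinable vertices. -/
def NCCands {VT VW : Type*} (ET : VT → VT → Prop) (EW : VW → VW → Prop)
    (N : Set VT) (M : N → VW) : VT → Set VW :=
  fun u => {c | (∃ h : u ∈ N, c = M ⟨u, h⟩) ∨ (u ∉ N ∧ Joinable ET EW N M u c)}

theorem StructEquiv.of_forall {V : Type*} {E : V → V → Prop} {v w : V}
    (h : ∀ p, (E p v ↔ E p w) ∧ (E v p ↔ E w p)) : StructEquiv E v w :=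
  ⟨fun p _ _ => h p, (h w).2.trans (h w).1.symm⟩

theorem CandEquivAt.mem_iff {VT VW : Type*} {C : VT → Set VW} {ET : VT → VT → Prop}
    {EW : VW → VW → Prop} {u : VT} {c₁ c₂ : VW} (h : CandEquivAt C ET EW u c₁ c₂) :
    c₁ ∈ C u ↔ c₂ ∈ C u := by
  rcases h with ⟨h₁, h₂⟩ | ⟨h₁, h₂, -⟩
  · exact iff_of_false h₁ h₂
  · exact iff_of_true h₁ h₂

section NCCands

variable {VT VW : Type*} {ET : VT → VT → Prop} {EW : VW → VW → Prop} {N : Set VT} {M : N → VW}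

theorem notMem_NCCands_of_mem {u : VT} (hu : u ∈ N) {w : VW} (hw : w ∉ Set.range M) :
    w ∉ NCCands ET EW N M u := by
  rintro (⟨hu', rfl⟩ | ⟨hu', -⟩)
  · exact hw ⟨_, rfl⟩
  · exact hu' hu

theorem mem_NCCands_iff_joinable {u : VT} (hu : u ∉ N) {w : VW} :
    w ∈ NCCands ET EW N M u ↔ Joinable ET EW N M u w := by
  simp [NCCands, hu]

theorem eq_of_mem_NCCands_of_mem {v : VT} (hv : v ∈ N) {c : VW}
    (hc : c ∈ NCCands ET EW N M v) : c = M ⟨v, hv⟩ := by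
  rcases hc with ⟨_, rfl⟩ | ⟨hv', -⟩
  · rfl
  · exact absurd hv hv'

/-- Since `N` covers every template edge, all neighbours of `(u, w)` with `u ∉ N` are matched
pairs `(v, M v)`, and joinability of `w` supplies the world edge to each of them. -/
theorem candEdge_iff_of_notMem (hN : NodeCover ET N) {u : VT} (hu : u ∉ N) {w : VW}
    (hw : w ∈ NCCands ET EW N M u) (q : CandVert (NCCands ET EW N M)) :
    (CandEdge (NCCands ET EW N M) ET EW q ⟨(u, w), hw⟩ ↔ ET q.1.1 u) ∧
      (CandEdge (NCCands ET EW N M) ET EW ⟨(u, w), hw⟩ q ↔ ET u q.1.1) := by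
  obtain ⟨⟨v, c⟩, hc⟩ := q
  have hj := (mem_NCCands_iff_joinable hu).1 hw
  refine ⟨⟨And.left, fun hvu => ⟨hvu, ?_⟩⟩, ⟨And.left, fun huv => ⟨huv, ?_⟩⟩⟩
  · have hv : v ∈ N := (hN v u hvu).resolve_right hu
    obtain rfl := eq_of_mem_NCCands_of_mem hv hc
    exact (hj ⟨v, hv⟩).1 hvu
  · have hv : v ∈ N := (hN u v huv).resolve_left hu
    obtain rfl := eq_of_mem_NCCands_of_mem hv hc
    exact (hj ⟨v, hv⟩).2 huv

theorem structEquiv_candEdge_of_notMem (hN : NodeCover ET N) {u : VT} (hu : u ∉ N)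
    {w₁ w₂ : VW} (h₁ : w₁ ∈ NCCands ET EW N M u) (h₂ : w₂ ∈ NCCands ET EW N M u) :
    StructEquiv (CandEdge (NCCands ET EW N M) ET EW) ⟨(u, w₁), h₁⟩ ⟨(u, w₂), h₂⟩ :=
  StructEquiv.of_forall fun q =>
    ⟨(candEdge_iff_of_notMem hN hu h₁ q).1.trans (candEdge_iff_of_notMem hN hu h₂ q).1.symm,
      (candEdge_iff_of_notMem hN hu h₁ q).2.trans (candEdge_iff_of_notMem hN hu h₂ q).2.symm⟩

end NCCands

theorem nodeCoverEquiv_iff_fullCandEquiv_general {VT VW : Type*}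
    (ET : VT → VT → Prop) (EW : VW → VW → Prop)
    (N : Set VT) (hN : NodeCover ET N) (M : N → VW)
    (w₁ w₂ : VW) (hw₁ : w₁ ∉ Set.range M) (hw₂ : w₂ ∉ Set.range M) :
    (∀ u : VT, u ∉ N → (w₁ ∈ NCCands ET EW N M u ↔ w₂ ∈ NCCands ET EW N M u)) ↔
      FullCandEquiv (NCCands ET EW N M) ET EW w₁ w₂ := by
  refine ⟨fun h u => ?_, fun h u _ => (h u).mem_iff⟩
  by_cases hu : u ∈ N
  · exact Or.inl ⟨notMem_NCCands_of_mem hu hw₁, notMem_NCCands_of_mem hu hw₂⟩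
  by_cases h₁ : w₁ ∈ NCCands ET EW N M u
  · have h₂ := (h u hu).1 h₁
    exact Or.inr ⟨h₁, h₂, structEquiv_candEdge_of_notMem hN hu h₁ h₂⟩
  · exact Or.inl ⟨h₁, mt (h u hu).2 h₁⟩

theorem nodeCoverEquiv_iff_fullCandEquiv {VT VW : Type*}
    (ET : VT → VT → Prop) (EW : VW → VW → Prop)
    (N : Set VT) (hN : NodeCover ET N) (M : N → VW) (hM : PartialMatch ET EW N M)
    (w₁ w₂ : VW) (hw₁ : w₁ ∉ Set.range M) (hw₂ : w₂ ∉ Set.range M) :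
    (∀ u : VT, u ∉ N → (w₁ ∈ NCCands ET EW N M u ↔ w₂ ∈ NCCands ET EW N M u)) ↔
      FullCandEquiv (NCCands ET EW N M) ET EW w₁ w₂ :=
  nodeCoverEquiv_iff_fullCandEquiv_general ET EW N hN M w₁ w₂ hw₁ hw₂
end

section
/- Structurally equivalent world vertices outside the matched set are node cover equivalent with respect to any partial match on a node cover whose candidate sets consist of joinable vertices. -/
theorem StructEquiv.adj_iff {V : Type*} {E : V → V → Prop} {v w x : V}
    (h : StructEquiv E v w) (hv : x ≠ v) (hw : x ≠ w) :
    (E x v ↔ E x w) ∧ (E v x ↔ E w x) :=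
  h.1 x hv hw

theorem joinable_congr {VT VW : Type*} {ET : VT → VT → Prop} {EW : VW → VW → Prop}
    {N : Set VT} {M : N → VW} {u : VT} {c₁ c₂ : VW}
    (h : ∀ v : N, (EW (M v) c₁ ↔ EW (M v) c₂) ∧ (EW c₁ (M v) ↔ EW c₂ (M v))) :
    Joinable ET EW N M u c₁ ↔ Joinable ET EW N M u c₂ :=
  forall_congr' fun v =>
    and_congr (imp_congr_right fun _ => (h v).1) (imp_congr_right fun _ => (h v).2)

theorem structEquiv_imp_nodeCoverEquiv_general {VT VW : Type*}
    (ET : VT → VT → Prop) (EW : VW → VW → Prop)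
    (N : Set VT) (M : N → VW)
    (w₁ w₂ : VW) (hse : StructEquiv EW w₁ w₂)
    (hw₁ : w₁ ∉ Set.range M) (hw₂ : w₂ ∉ Set.range M) :
    ∀ u : VT, u ∉ N → (Joinable ET EW N M u w₁ ↔ Joinable ET EW N M u w₂) :=
  fun _ _ => joinable_congr fun v => hse.adj_iff (fun h => hw₁ ⟨v, h⟩) (fun h => hw₂ ⟨v, h⟩)

theorem structEquiv_imp_nodeCoverEquiv {VT VW : Type*}
    (ET : VT → VT → Prop) (EW : VW → VW → Prop)
    (N : Set VT) (hN : NodeCover ET N) (M : N → VW) (hM : PartialMatch ET EW N M)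
    (w₁ w₂ : VW) (hse : StructEquiv EW w₁ w₂)
    (hw₁ : w₁ ∉ Set.range M) (hw₂ : w₂ ∉ Set.range M) :
    ∀ u : VT, u ∉ N → (Joinable ET EW N M u w₁ ↔ Joinable ET EW N M u w₂) :=
  structEquiv_imp_nodeCoverEquiv_general ET EW N M w₁ w₂ hse hw₁ hw₂
end

section
/- The image of the set of vertices outside a node cover under any subgraph isomorphism is an independent set when restricted to edges among those images not forced by the cover; more precisely, if N is a node cover of G_T, then for any u, v ∈ V_T \ N there is no edge (u,v) in E_T, and hence any injective map on V_T \ N whose pairs are all joinable to a partial match M on N extends M to a subgraph isomorphism. -/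
theorem NodeCover.not_rel_of_not_mem {VT : Type*} {ET : VT → VT → Prop} {N : Set VT}
    (hN : NodeCover ET N) {u v : VT} (hu : u ∉ N) (hv : v ∉ N) : ¬ ET u v :=
  fun h => (hN u v h).elim hu hv

theorem NodeCover.map_rel_dite {VT VW : Type*} {ET : VT → VT → Prop} {EW : VW → VW → Prop}
    {N : Set VT} [DecidablePred (· ∈ N)] (hN : NodeCover ET N) {M : N → VW}
    (hM : ∀ a b : N, ET a b → EW (M a) (M b)) {g : {u : VT // u ∉ N} → VW}
    (hg_join : ∀ u : {u : VT // u ∉ N}, Joinable ET EW N M u (g u)) {a b : VT} (hab : ET a b) :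
    EW (if h : a ∈ N then M ⟨a, h⟩ else g ⟨a, h⟩) (if h : b ∈ N then M ⟨b, h⟩ else g ⟨b, h⟩) := by
  by_cases ha : a ∈ N <;> by_cases hb : b ∈ N <;> simp only [ha, hb, dif_pos]
  · exact hM ⟨a, ha⟩ ⟨b, hb⟩ hab
  · exact (hg_join ⟨b, hb⟩ ⟨a, ha⟩).1 hab
  · exact (hg_join ⟨a, ha⟩ ⟨b, hb⟩).2 hab
  · exact absurd hab (hN.not_rel_of_not_mem ha hb)

open Classical in
theorem nodeCover_extension_subIso {VT VW : Type*}
    (ET : VT → VT → Prop) (EW : VW → VW → Prop)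
    (N : Set VT) (hN : NodeCover ET N) (M : N → VW) (hM : PartialMatch ET EW N M)
    (g : {u : VT // u ∉ N} → VW) (hg_inj : Function.Injective g)
    (hg_avoid : ∀ u, g u ∉ Set.range M)
    (hg_join : ∀ u : {u : VT // u ∉ N}, Joinable ET EW N M u (g u)) :
    (∀ u v : VT, u ∉ N → v ∉ N → ¬ ET u v) ∧
    SubIso ET EW (fun u => if h : u ∈ N then M ⟨u, h⟩ else g ⟨u, h⟩) :=
  ⟨fun _ _ hu hv => hN.not_rel_of_not_mem hu hv,
    hM.1.dite (· ∈ N) hg_inj fun h => hg_avoid _ ⟨_, h⟩,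
    fun _ _ hab => hN.map_rel_dite hM.2 hg_join hab⟩
end
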